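/- Let A be symmetric with eigenvalues λ_1 ≤ … ≤ λ_n and λ_ℓ < λ_{ℓ+1}, θ > 0, τ = (λ_{ℓ+1}+λ_n)/2 − 1/θ − 1, G = (1+θ(1+τ))I − θA. Let P be the orthogonal projection onto span(φ_1,…,φ_ℓ) and Q = I − P. Then for any x ∈ ℝ^n with Px ≠ 0, ‖Q G x‖ / ‖P G x‖ ≤ ρ · ‖Qx‖/‖Px‖ where ρ = (λ_n−λ_{ℓ+1})/(λ_n+λ_{ℓ+1}−2λ_ℓ). -/

import Mathlib

/-!
In the orthonormal eigenbasis, `G φ_j = μ_j φ_j` with `μ_j = θ (c - λ_j)`, where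
`c = (λ_{ℓ+1} + λ_n) / 2`, so `G` is diagonal and `P`, `Q` pick out the coordinates `j ≤ ℓ`
and `j > ℓ`. For `j ≤ ℓ` the multiplier satisfies `μ_j ≥ β := θ (c - λ_ℓ) > 0`, and for `j > ℓ`,
`λ_j ∈ [λ_{ℓ+1}, λ_n]` gives `|μ_j| ≤ α := θ (λ_n - λ_{ℓ+1}) / 2`. By Parseval,
`‖Q G x‖ ≤ α ‖Q x‖` and `‖P G x‖ ≥ β ‖P x‖`, and `α / β = ρ`.
-/

open Matrix Finset

/-- The Euclidean norm on `Fin m → ℝ`. -/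
noncomputable def euclNorm {m : ℕ} (x : Fin m → ℝ) : ℝ := Real.sqrt (∑ i, x i ^ 2)

lemma euclNorm_eq_sqrt_dotProduct {m : ℕ} (y : Fin m → ℝ) : euclNorm y = √(y ⬝ᵥ y) := by
  simp only [euclNorm, dotProduct, sq]

lemma euclNorm_pos {m : ℕ} {y : Fin m → ℝ} (hy : y ≠ 0) : 0 < euclNorm y := by
  rw [euclNorm_eq_sqrt_dotProduct, Real.sqrt_pos]
  exact (dotProduct_self_star_nonneg y).lt_of_ne' (dotProduct_self_eq_zero.not.mpr hy)

lemma sqrt_sum_sq_mul_le {ι : Type*} (T : Finset ι) (b c : ι → ℝ) {C : ℝ} (hC : 0 ≤ C)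
    (hc : ∀ j ∈ T, |c j| ≤ C) : √(∑ j ∈ T, (c j * b j) ^ 2) ≤ C * √(∑ j ∈ T, b j ^ 2) := by
  rw [← Real.sqrt_sq hC, ← Real.sqrt_mul (sq_nonneg C), Finset.mul_sum]
  refine Real.sqrt_le_sqrt (sum_le_sum fun j hj => ?_)
  rw [mul_pow]
  exact mul_le_mul_of_nonneg_right (sq_le_sq.mpr ((hc j hj).trans (le_abs_self C))) (sq_nonneg _)

lemma mul_sqrt_sum_sq_le {ι : Type*} (T : Finset ι) (b c : ι → ℝ) {β : ℝ} (hβ : 0 ≤ β)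
    (hc : ∀ j ∈ T, β ≤ |c j|) : β * √(∑ j ∈ T, b j ^ 2) ≤ √(∑ j ∈ T, (c j * b j) ^ 2) := by
  rw [← Real.sqrt_sq hβ, ← Real.sqrt_mul (sq_nonneg β), Finset.mul_sum]
  refine Real.sqrt_le_sqrt (sum_le_sum fun j hj => ?_)
  rw [mul_pow]
  exact mul_le_mul_of_nonneg_right (sq_le_sq.mpr ((abs_of_nonneg hβ).trans_le (hc j hj)))
    (sq_nonneg _)

section Orthonormal

variable {ι : Type*} [Fintype ι] {φ : ι → ι → ℝ}

/-- For an orthonormal basis `φ`, the orthogonal projection onto `span {φ j | j ∈ T}`. -/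
def spectralProj (φ : ι → ι → ℝ) (T : Finset ι) (y : ι → ℝ) : ι → ℝ :=
  ∑ j ∈ T, (y ⬝ᵥ φ j) • φ j

lemma mulVec_dotProduct_of_isSymm {M : Matrix ι ι ℝ} (hM : M.IsSymm) {v : ι → ℝ} {μ : ℝ}
    (hv : M *ᵥ v = μ • v) (y : ι → ℝ) : M *ᵥ y ⬝ᵥ v = μ * (y ⬝ᵥ v) := by
  rw [dotProduct_comm, dotProduct_mulVec, ← mulVec_transpose, hM.eq, hv, smul_dotProduct,
    smul_eq_mul, dotProduct_comm]

lemma spectralProj_mulVec_of_isSymm {M : Matrix ι ι ℝ} (hM : M.IsSymm) {μ : ι → ℝ}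
    (hv : ∀ j, M *ᵥ φ j = μ j • φ j) (T : Finset ι) (y : ι → ℝ) :
    spectralProj φ T (M *ᵥ y) = ∑ j ∈ T, (μ j * (y ⬝ᵥ φ j)) • φ j := by
  simp only [spectralProj, mulVec_dotProduct_of_isSymm hM (hv _)]

variable [DecidableEq ι]

def DotOrthonormal (φ : ι → ι → ℝ) : Prop :=
  ∀ i j, φ i ⬝ᵥ φ j = if i = j then 1 else 0

lemma dotProduct_self_sum_smul_of_orthonormal (hφ : DotOrthonormal φ) (T : Finset ι)
    (b : ι → ℝ) :
    (∑ j ∈ T, b j • φ j) ⬝ᵥ (∑ j ∈ T, b j • φ j) = ∑ j ∈ T, b j ^ 2 := by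
  unfold DotOrthonormal at hφ
  simp [sum_dotProduct, dotProduct_sum, hφ, sq]

lemma sum_dotProduct_smul_eq_self_of_orthonormal (hφ : DotOrthonormal φ) (y : ι → ℝ) :
    ∑ i, (y ⬝ᵥ φ i) • φ i = y := by
  have hrows : of φ * (of φ)ᵀ = 1 := by
    ext i j
    simpa [mul_apply, one_apply, dotProduct] using hφ i j
  calc ∑ i, (y ⬝ᵥ φ i) • φ i = y ᵥ* (of φ)ᵀ ᵥ* of φ := by
        rw [vecMul_transpose, vecMul_eq_sum]
        exact sum_congr rfl fun i _ => by rw [mulVec, dotProduct_comm]; rfl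
    _ = y := by rw [vecMul_vecMul, mul_eq_one_comm.mp hrows, vecMul_one]

lemma spectralProj_compl_eq_sub (hφ : DotOrthonormal φ) (T : Finset ι) (y : ι → ℝ) :
    spectralProj φ Tᶜ y = y - spectralProj φ T y := by
  rw [eq_sub_iff_add_eq', spectralProj, spectralProj, sum_add_sum_compl,
    sum_dotProduct_smul_eq_self_of_orthonormal hφ]

end Orthonormal

section EuclNorm

variable {m : ℕ} {φ : Fin m → Fin m → ℝ} {M : Matrix (Fin m) (Fin m) ℝ} {μ : Fin m → ℝ}
  {T : Finset (Fin m)}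

lemma euclNorm_sum_smul_of_orthonormal (hφ : DotOrthonormal φ) (b : Fin m → ℝ) :
    euclNorm (∑ j ∈ T, b j • φ j) = √(∑ j ∈ T, b j ^ 2) := by
  rw [euclNorm_eq_sqrt_dotProduct, dotProduct_self_sum_smul_of_orthonormal hφ]

lemma euclNorm_spectralProj_mulVec_le (hφ : DotOrthonormal φ)
    (hM : M.IsSymm) (hv : ∀ j, M *ᵥ φ j = μ j • φ j) {C : ℝ} (hC : 0 ≤ C)
    (hμ : ∀ j ∈ T, |μ j| ≤ C) (y : Fin m → ℝ) :
    euclNorm (spectralProj φ T (M *ᵥ y)) ≤ C * euclNorm (spectralProj φ T y) := by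
  rw [spectralProj_mulVec_of_isSymm hM hv, spectralProj, euclNorm_sum_smul_of_orthonormal hφ,
    euclNorm_sum_smul_of_orthonormal hφ]
  exact sqrt_sum_sq_mul_le T _ μ hC hμ

lemma mul_euclNorm_spectralProj_le_mulVec (hφ : DotOrthonormal φ)
    (hM : M.IsSymm) (hv : ∀ j, M *ᵥ φ j = μ j • φ j) {β : ℝ} (hβ : 0 ≤ β)
    (hμ : ∀ j ∈ T, β ≤ |μ j|) (y : Fin m → ℝ) :
    β * euclNorm (spectralProj φ T y) ≤ euclNorm (spectralProj φ T (M *ᵥ y)) := by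
  rw [spectralProj_mulVec_of_isSymm hM hv, spectralProj, euclNorm_sum_smul_of_orthonormal hφ,
    euclNorm_sum_smul_of_orthonormal hφ]
  exact mul_sqrt_sum_sq_le T _ μ hβ hμ

lemma spectralProj_ratio_mulVec_le (hφ : DotOrthonormal φ)
    (hM : M.IsSymm) (hv : ∀ j, M *ᵥ φ j = μ j • φ j) {α β : ℝ} (hα : 0 ≤ α) (hβ : 0 < β)
    (hμTc : ∀ j ∈ Tᶜ, |μ j| ≤ α) (hμT : ∀ j ∈ T, β ≤ |μ j|) {y : Fin m → ℝ}
    (hy : spectralProj φ T y ≠ 0) :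
    euclNorm (spectralProj φ Tᶜ (M *ᵥ y)) / euclNorm (spectralProj φ T (M *ᵥ y))
      ≤ α / β * (euclNorm (spectralProj φ Tᶜ y) / euclNorm (spectralProj φ T y)) := by
  rw [div_mul_div_comm]
  exact div_le_div₀ (mul_nonneg hα (Real.sqrt_nonneg _))
    (euclNorm_spectralProj_mulVec_le hφ hM hv hα hμTc y)
    (mul_pos hβ (euclNorm_pos hy)) (mul_euclNorm_spectralProj_le_mulVec hφ hM hv hβ.le hμT y)

end EuclNorm

lemma abs_mul_midpoint_sub_le {θ a b t : ℝ} (hθ : 0 ≤ θ) (hat : a ≤ t) (htb : t ≤ b) :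
    |θ * ((a + b) / 2 - t)| ≤ θ * ((b - a) / 2) := by
  rw [abs_mul, abs_of_nonneg hθ]
  exact mul_le_mul_of_nonneg_left (abs_le.mpr ⟨by linarith, by linarith⟩) hθ

theorem richardson_step_contracts_projection_ratio
    (n : ℕ) (A : Matrix (Fin (n + 1)) (Fin (n + 1)) ℝ) (hA : A.IsSymm)
    (φ : Fin (n + 1) → (Fin (n + 1) → ℝ)) (lam : Fin (n + 1) → ℝ)
    (hortho : ∀ i j, φ i ⬝ᵥ φ j = if i = j then (1 : ℝ) else 0)
    (heig : ∀ j, A.mulVec (φ j) = lam j • φ j)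
    (hmono : Monotone lam)
    (ℓ : Fin (n + 1)) (hℓ : (ℓ : ℕ) + 1 ≤ n)
    (hgap : lam ℓ < lam ⟨(ℓ : ℕ) + 1, by omega⟩)
    (θ τ : ℝ) (hθ : 0 < θ)
    (hτ : τ = (lam ⟨(ℓ : ℕ) + 1, by omega⟩ + lam (Fin.last n)) / 2 - 1 / θ - 1)
    (G : Matrix (Fin (n + 1)) (Fin (n + 1)) ℝ)
    (hG : G = (1 + θ * (1 + τ)) • (1 : Matrix (Fin (n + 1)) (Fin (n + 1)) ℝ) - θ • A)
    (ρ : ℝ)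
    (hρ : ρ = (lam (Fin.last n) - lam ⟨(ℓ : ℕ) + 1, by omega⟩) /
        (lam (Fin.last n) + lam ⟨(ℓ : ℕ) + 1, by omega⟩ - 2 * lam ℓ))
    (P Q : (Fin (n + 1) → ℝ) → (Fin (n + 1) → ℝ))
    (hP : ∀ y, P y = ∑ i ∈ Finset.univ.filter (fun i => i ≤ ℓ), (y ⬝ᵥ φ i) • φ i)
    (hQ : ∀ y, Q y = y - P y)
    (x : Fin (n + 1) → ℝ) (hPx : P x ≠ 0) :
    euclNorm (Q (G.mulVec x)) / euclNorm (P (G.mulVec x))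
      ≤ ρ * (euclNorm (Q x) / euclNorm (P x)) := by
  set ℓ' : Fin (n + 1) := ⟨(ℓ : ℕ) + 1, by omega⟩
  set S : Finset (Fin (n + 1)) := univ.filter (· ≤ ℓ)
  set mid := (lam ℓ' + lam (Fin.last n)) / 2 with hmid
  have hℓ'n : lam ℓ' ≤ lam (Fin.last n) := hmono (Fin.le_last ℓ')
  have hPS : ∀ y, P y = spectralProj φ S y := hP
  have hQS : ∀ y, Q y = spectralProj φ Sᶜ y := fun y => by
    rw [hQ, hPS, spectralProj_compl_eq_sub hortho]
  have hGsymm : G.IsSymm := hG ▸ (isSymm_one.smul _).sub (hA.smul θ)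
  have hGφ : ∀ j, G *ᵥ φ j = (θ * (mid - lam j)) • φ j := fun j => by
    rw [hG, sub_mulVec, smul_mulVec, smul_mulVec, one_mulVec, heig, smul_smul, ← sub_smul, hτ]
    congr 1
    field_simp
    ring
  have hupper : ∀ j ∈ Sᶜ, |θ * (mid - lam j)| ≤ θ * ((lam (Fin.last n) - lam ℓ') / 2) :=
    fun j hj => abs_mul_midpoint_sub_le hθ.le
      (hmono (show ℓ' ≤ j from (by simpa [S] using hj : ℓ < j))) (hmono (Fin.le_last j))
  have hlower : ∀ j ∈ S, θ * (mid - lam ℓ) ≤ |θ * (mid - lam j)| := fun j hj =>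
    (mul_le_mul_of_nonneg_left (by linarith [hmono (mem_filter.mp hj).2]) hθ.le).trans
      (le_abs_self _)
  have hρ' : ρ = θ * ((lam (Fin.last n) - lam ℓ') / 2) / (θ * (mid - lam ℓ)) := by
    rw [hρ, hmid]
    field_simp
    ring
  simp only [hPS, hQS, hρ']
  exact spectralProj_ratio_mulVec_le hortho hGsymm hGφ (mul_nonneg hθ.le (by linarith))
    (mul_pos hθ (by linarith)) hupper hlower (hPS x ▸ hPx)
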